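/- arXiv:2510.11698 — 9 statements merged into one kernel-verified Lean document; each statement's English description precedes it below -/
import Mathlib

section
/- Let n and k be positive integers with k < n - k, and suppose that lcm(1, 2, ..., k) divides n - k. If a permutation π of {1, ..., n} has a cycle of length n - k, then the order of π equals n - k. -/
/-!
The order of `π` is the lcm of its cycle lengths. The cycle of length `n - k` leaves at most
`k` points for the other cycles, so each of their lengths lies in `[1, k]`, hence divides
`lcm(1, …, k)` and therefore `n - k`.
-/

namespace Equiv.Perm

variable {α : Type*} [Fintype α] [DecidableEq α]

theorem add_le_card_of_mem_erase_cycleType {σ : Perm α} {m b : ℕ} (hm : m ∈ σ.cycleType)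
    (hb : b ∈ σ.cycleType.erase m) : m + b ≤ Fintype.card α :=
  calc m + b ≤ m + (σ.cycleType.erase m).sum :=
        Nat.add_le_add_left (Multiset.le_sum_of_mem hb) m
    _ = σ.cycleType.sum := by rw [← Multiset.sum_cons, Multiset.cons_erase hm]
    _ ≤ Fintype.card α := by rw [sum_cycleType]; exact σ.support.card_le_univ

theorem orderOf_eq_of_mem_cycleType_of_lcm_Icc_dvd {σ : Perm α} {m k : ℕ}
    (hm : m ∈ σ.cycleType) (hcard : Fintype.card α ≤ m + k)
    (hdvd : (Finset.Icc 1 k).lcm id ∣ m) : orderOf σ = m := by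
  rw [← lcm_cycleType]
  refine Nat.dvd_antisymm (Multiset.lcm_dvd.mpr fun b hb => ?_) (Multiset.dvd_lcm hm)
  rcases Multiset.mem_cons.mp ((Multiset.cons_erase hm).symm ▸ hb) with rfl | hb'
  · exact dvd_rfl
  · have hb_pos : 1 ≤ b := (σ.one_lt_of_mem_cycleType hb).le
    have hb_le : b ≤ k := by have := add_le_card_of_mem_erase_cycleType hm hb'; omega
    exact (Finset.dvd_lcm (f := id) (Finset.mem_Icc.mpr ⟨hb_pos, hb_le⟩)).trans hdvd

end Equiv.Perm

theorem stmt_0_general (n k : ℕ)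
    (hdvd : (Finset.Icc 1 k).lcm id ∣ n - k)
    (π : Equiv.Perm (Fin n)) (hc : (n - k) ∈ π.cycleType) :
    orderOf π = n - k :=
  π.orderOf_eq_of_mem_cycleType_of_lcm_Icc_dvd hc (by rw [Fintype.card_fin]; omega) hdvd

theorem stmt_0 (n k : ℕ) (hk : 0 < k) (hkn : k < n - k)
    (hdvd : (Finset.Icc 1 k).lcm id ∣ n - k)
    (π : Equiv.Perm (Fin n)) (hc : (n - k) ∈ π.cycleType) :
    orderOf π = n - k :=
  stmt_0_general n k hdvd π hc
end

section
/- For positive integers n and k with k ∈ K_n and k < n/2, the number of permutations of {1, ..., n} whose order equals exactly n - k is at least n!/(n-k). -/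
/-!
Put `m = n - k` and let `c` be an `m`-cycle on the first `m` points. For `σ ∈ S_n` and `τ ∈ S_k`
the permutation `σ (c ⊕ τ) σ⁻¹` has order `lcm(m, ord τ) = m`, because `ord τ` divides
`lcm(1, …, k)`. Since `m > k`, a permutation conjugating `c ⊕ τ` to `c ⊕ τ'` preserves the
support of `c`, so it is `a ⊕ b` with `a` in the centralizer of `c`, which has at most `m`
elements. Hence each value is attained by at most `m · k!` of the `n! · k!` pairs `(σ, τ)`, and at
least `n!/m` permutations of order `m` arise.
-/

open Finset

namespace Equiv.Perm

variable {α β : Type*}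

theorem sumCongr_zpow (a : Perm α) (b : Perm β) (i : ℤ) :
    sumCongr a b ^ i = sumCongr (a ^ i) (b ^ i) :=
  (map_zpow (sumCongrHom α β) (a, b) i).symm

theorem SameCycle.sumCongr_inl {a : Perm α} {x y : α} (h : a.SameCycle x y) (b : Perm β) :
    (sumCongr a b).SameCycle (Sum.inl x) (Sum.inl y) := by
  obtain ⟨i, rfl⟩ := h
  exact ⟨i, by simp [sumCongr_zpow]⟩

theorem SameCycle.mem_range_inr_of_sumCongr {a : Perm α} {b : Perm β} {y : β} {z : α ⊕ β}
    (h : (sumCongr a b).SameCycle (Sum.inr y) z) : z ∈ Set.range Sum.inr := by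
  obtain ⟨i, rfl⟩ := h
  exact ⟨(b ^ i) y, by simp [sumCongr_zpow]⟩

theorem orderOf_sumCongr (a : Perm α) (b : Perm β) :
    orderOf (sumCongr a b) = (orderOf a).lcm (orderOf b) :=
  (orderOf_injective (sumCongrHom α β) sumCongrHom_injective (a, b)).trans (Prod.orderOf _)

theorem orderOf_dvd_lcm_Icc_card [Fintype α] [DecidableEq α] (σ : Perm α) :
    orderOf σ ∣ (Icc 1 (Fintype.card α)).lcm id := by
  rw [← lcm_cycleType]
  refine Multiset.lcm_dvd.mpr fun i hi => ?_
  have hi_le : i ≤ Fintype.card α := (le_card_support_of_mem_cycleType hi).trans (card_le_univ _)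
  have hi_pos : 1 ≤ i := (two_le_of_mem_cycleType hi).trans' (by norm_num)
  exact dvd_lcm (f := id) (mem_Icc.mpr ⟨hi_pos, hi_le⟩)

theorem eq_of_commute_of_sameCycle {c a b : Perm α} {x : α} (hc : ∀ y, c.SameCycle x y)
    (ha : Commute a c) (hb : Commute b c) (hx : a x = b x) : a = b := by
  ext y
  obtain ⟨i, rfl⟩ := hc y
  rw [← mul_apply, (ha.zpow_right i).eq, mul_apply, hx, ← mul_apply, ← (hb.zpow_right i).eq,
    mul_apply]

theorem card_filter_commute_le [Fintype α] [DecidableEq α] {c : Perm α} {x : α}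
    (hc : ∀ y, c.SameCycle x y) : #{a : Perm α | a * c = c * a} ≤ Fintype.card α :=
  card_le_card_of_injOn (fun a => a x) (fun _ _ => mem_coe.mpr (mem_univ _))
    fun _ ha _ hb hab => eq_of_commute_of_sameCycle hc (mem_filter.mp ha).2 (mem_filter.mp hb).2 hab

section Conj

variable [Fintype α] [Fintype β] {c : Perm α} {τ τ' : Perm β} {d : Perm (α ⊕ β)}

/-- A permutation conjugating `c ⊕ τ` to `c ⊕ τ'` cannot move a point of the `α`-orbit into `β`,
as that orbit, of size `card α`, would then fit into `β`. -/
theorem mapsTo_range_inl_of_conj_sumCongr (hc : ∀ x y, c.SameCycle x y)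
    (hcard : Fintype.card β < Fintype.card α)
    (h : d * sumCongr c τ * d⁻¹ = sumCongr c τ') :
    Set.MapsTo d (Set.range Sum.inl) (Set.range Sum.inl) := by
  rintro _ ⟨x, rfl⟩
  rcases hx : d (Sum.inl x) with x' | y
  · exact ⟨x', rfl⟩
  have hmem (x' : α) : d (Sum.inl x') ∈ Set.range Sum.inr := by
    have := ((hc x x').sumCongr_inl τ).conj (g := d)
    rw [h, hx] at this
    exact this.mem_range_inr_of_sumCongr
  choose f hf using hmem
  have hf_inj : Function.Injective f := fun x₁ x₂ h12 =>
    Sum.inl_injective (d.injective (by rw [← hf x₁, ← hf x₂, h12]))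
  exact absurd (Fintype.card_le_of_injective f hf_inj) (not_le.mpr hcard)

theorem exists_sumCongr_of_conj_sumCongr (hc : ∀ x y, c.SameCycle x y)
    (hcard : Fintype.card β < Fintype.card α)
    (h : d * sumCongr c τ * d⁻¹ = sumCongr c τ') :
    ∃ a b, d = sumCongr a b ∧ Commute a c ∧ b * τ * b⁻¹ = τ' := by
  obtain ⟨⟨a, b⟩, rfl⟩ :=
    mem_sumCongrHom_range_of_perm_mapsTo_inl (mapsTo_range_inl_of_conj_sumCongr hc hcard h)
  have hpair : (a * c * a⁻¹, b * τ * b⁻¹) = (c, τ') := by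
    apply sumCongrHom_injective
    simpa [sumCongr_mul, sumCongr_inv] using h
  simp only [Prod.mk.injEq] at hpair
  exact ⟨a, b, rfl, mul_inv_eq_iff_eq_mul.mp hpair.1, hpair.2⟩

theorem card_filter_conj_sumCongr_eq_le [DecidableEq α] [DecidableEq β]
    (hc : ∀ x y, c.SameCycle x y) (hcard : Fintype.card β < Fintype.card α)
    (π : Perm (α ⊕ β)) :
    #{p : Perm (α ⊕ β) × Perm β | p.1 * sumCongr c p.2 * p.1⁻¹ = π}
      ≤ Fintype.card α * Fintype.card (Perm β) := by
  set fiber := ({p : Perm (α ⊕ β) × Perm β | p.1 * sumCongr c p.2 * p.1⁻¹ = π} : Finset _)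
  obtain hempty | ⟨⟨σ₀, τ₀⟩, hp₀⟩ := fiber.eq_empty_or_nonempty
  · simp [hempty]
  obtain ⟨x₀⟩ : Nonempty α := Fintype.card_pos_iff.mp (hcard.trans_le' (Nat.zero_le _))
  set C : Finset (Perm α) := {a | a * c = c * a}
  have hsub : fiber ⊆ (C ×ˢ univ).image
      fun q : Perm α × Perm β => (σ₀ * sumCongr q.1 q.2, q.2⁻¹ * τ₀ * q.2) := by
    rintro ⟨σ, τ⟩ hp
    replace hp₀ := (mem_filter.mp hp₀).2
    replace hp := (mem_filter.mp hp).2.trans hp₀.symm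
    have hconj : (σ₀⁻¹ * σ) * sumCongr c τ * (σ₀⁻¹ * σ)⁻¹ = sumCongr c τ₀ := calc
      _ = σ₀⁻¹ * (σ * sumCongr c τ * σ⁻¹) * σ₀ := by group
      _ = sumCongr c τ₀ := by rw [hp]; group
    obtain ⟨a, b, hd, hac, hb⟩ := exists_sumCongr_of_conj_sumCongr hc hcard hconj
    refine mem_image.mpr
      ⟨(a, b), mem_product.mpr ⟨mem_filter.mpr ⟨mem_univ _, hac⟩, mem_univ _⟩, ?_⟩
    simp only [← hd, ← hb, Prod.mk.injEq]
    constructor <;> group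
  calc #fiber ≤ #(C ×ˢ (univ : Finset (Perm β))) :=
        (card_le_card hsub).trans card_image_le
    _ ≤ Fintype.card α * Fintype.card (Perm β) := by
        rw [card_product, card_univ]
        exact Nat.mul_le_mul_right _ (card_filter_commute_le (hc x₀))

end Conj

theorem card_perm_sum_le_mul_card_orderOf_eq [Fintype α] [Fintype β] [DecidableEq α]
    [DecidableEq β] {c : Perm α} (hc : c.IsCycle) (hsupp : c.support = univ)
    (hcard : Fintype.card β < Fintype.card α)
    (hlcm : (Icc 1 (Fintype.card β)).lcm id ∣ Fintype.card α) :
    Fintype.card (Perm (α ⊕ β)) ≤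
      Fintype.card α * Nat.card {π : Perm (α ⊕ β) // orderOf π = Fintype.card α} := by
  have hsc (x y : α) : c.SameCycle x y :=
    hc.sameCycle (mem_support.mp (hsupp ▸ mem_univ x)) (mem_support.mp (hsupp ▸ mem_univ y))
  have hc_ord : orderOf c = Fintype.card α := by rw [hc.orderOf, hsupp, card_univ]
  let Φ : Perm (α ⊕ β) × Perm β → Perm (α ⊕ β) := fun p => p.1 * sumCongr c p.2 * p.1⁻¹
  have himage : univ.image Φ ⊆ ({π | orderOf π = Fintype.card α} : Finset _) := by
    rintro _ hπ
    obtain ⟨⟨σ, τ⟩, -, rfl⟩ := mem_image.mp hπ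
    rw [mem_filter, show Φ (σ, τ) = MulAut.conj σ (sumCongr c τ) from rfl, MulEquiv.orderOf_eq,
      orderOf_sumCongr, hc_ord]
    exact ⟨mem_univ _, Nat.lcm_eq_left ((orderOf_dvd_lcm_Icc_card τ).trans hlcm)⟩
  have hcount := card_le_mul_card_image univ _ fun π _ =>
    card_filter_conj_sumCongr_eq_le hsc hcard π
  rw [card_univ, Fintype.card_prod, mul_right_comm] at hcount
  rw [Nat.card_eq_fintype_card, Fintype.card_subtype]
  exact (Nat.le_of_mul_le_mul_right hcount Fintype.card_pos).trans
    (Nat.mul_le_mul_left _ (card_le_card himage))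

theorem nat_card_orderOf_eq_congr (e : α ≃ β) (m : ℕ) :
    Nat.card {π : Perm α // orderOf π = m} = Nat.card {π : Perm β // orderOf π = m} :=
  Nat.card_congr <| e.permCongrHom.toEquiv.subtypeEquiv fun π =>
    (MulEquiv.orderOf_eq e.permCongrHom π).symm ▸ Iff.rfl

end Equiv.Perm

theorem stmt_1_general (n k : ℕ) (hk : 0 < k)
    (hK : k < n ∧ (Finset.Icc 1 k).lcm id ∣ n - k)
    (hhalf : 2 * k < n) :
    Nat.factorial n / (n - k) ≤
      Nat.card {π : Equiv.Perm (Fin n) // orderOf π = n - k} := by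
  have hm : 2 ≤ n - k := by omega
  have hmk : n - k + k = n := by omega
  have key := Equiv.Perm.card_perm_sum_le_mul_card_orderOf_eq (β := Fin k)
    (isCycle_finRotate_of_le hm) (support_finRotate_of_le hm)
    (by simp only [Fintype.card_fin]; omega)
    (by simpa only [Fintype.card_fin] using hK.2)
  rw [Fintype.card_perm, Fintype.card_sum, Fintype.card_fin, Fintype.card_fin, hmk,
    Equiv.Perm.nat_card_orderOf_eq_congr (finSumFinEquiv.trans (finCongr hmk))] at key
  exact Nat.div_le_of_le_mul key

theorem stmt_1 (n k : ℕ) (hn : 0 < n) (hk : 0 < k)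
    (hK : k < n ∧ (Finset.Icc 1 k).lcm id ∣ n - k)
    (hhalf : 2 * k < n) :
    Nat.factorial n / (n - k) ≤
      Nat.card {π : Equiv.Perm (Fin n) // orderOf π = n - k} :=
  stmt_1_general n k hk hK hhalf
end

section
/- For all positive integers n and m, the number of permutations π of {1, ..., n} whose order divides m is at most τ(m) · (n-1)!, where τ(m) is the number of positive divisors of m. -/
/-! The point `x` lies on a cycle of `π` of length `d = orderOf (π.cycleOf x)`, a divisor of
`orderOf π`. Given `d`, the permutation `π` is recovered from the list of the other `d - 1` points
of that cycle in cycle order, followed by the images under `π` of the points off the cycle, taken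
in an order that depends only on the cycle. That list is an arrangement of the `n - 1` points
other than `x`, so at most `(n - 1)!` permutations share each value of `d`. -/

open Finset
open scoped Nat

namespace Equiv.Perm

variable {α : Type*}

theorem sameCycle_cycleOf_iff {f : Perm α} [DecidableRel f.SameCycle] {x y : α} :
    (f.cycleOf x).SameCycle x y ↔ f.SameCycle x y :=
  exists_congr fun n => by rw [cycleOf_zpow_apply_self]

variable [Fintype α] [DecidableEq α]

theorem cons_tail_toList {f : Perm α} {x : α} (hx : x ∈ f.support) :
    x :: (f.toList x).tail = f.toList x := by
  have hne : f.toList x ≠ [] := toList_eq_nil_iff.not.2 (not_not.2 hx)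
  conv_rhs => rw [← List.cons_head_tail hne]
  rw [List.head_eq_getElem, toList_getElem_zero f x hx]

theorem formPerm_cons_tail_toList (f : Perm α) (x : α) :
    (x :: (f.toList x).tail).formPerm = f.cycleOf x := by
  by_cases hx : x ∈ f.support
  · rw [cons_tail_toList hx, formPerm_toList]
  · rw [toList_eq_nil_iff.2 hx, List.tail_nil, List.formPerm_singleton, eq_comm,
      cycleOf_eq_one_iff]
    simpa using hx

theorem length_tail_toList_add_one (f : Perm α) (x : α) :
    (f.toList x).tail.length + 1 = orderOf (f.cycleOf x) := by
  by_cases hx : x ∈ f.support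
  · rw [List.length_tail, (isCycle_cycleOf f (mem_support.1 hx)).orderOf, ← length_toList]
    have := length_toList_pos_of_mem_support f x hx
    omega
  · rw [toList_eq_nil_iff.2 hx, (cycleOf_eq_one_iff f).2 (by simpa using hx)]
    simp

theorem mem_tail_toList_iff {f : Perm α} {x y : α} :
    y ∈ (f.toList x).tail ↔ f.SameCycle x y ∧ y ≠ x := by
  by_cases hx : x ∈ f.support
  · have hnd := nodup_toList f x
    rw [← cons_tail_toList hx, List.nodup_cons] at hnd
    rw [← mem_toList_iff.trans (and_iff_left hx), ← cons_tail_toList hx, List.mem_cons]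
    constructor
    · exact fun hy => ⟨Or.inr hy, fun h => hnd.1 (h ▸ hy)⟩
    · rintro ⟨hy | hy, hne⟩
      exacts [absurd hy hne, hy]
  · rw [toList_eq_nil_iff.2 hx]
    simp only [List.tail_nil, List.not_mem_nil, false_iff, not_and, not_not]
    exact fun h => (h.eq_of_left (notMem_support.1 hx)).symm

noncomputable def cycleCode (f : Perm α) (x : α) : List α :=
  (f.toList x).tail ++ ({y | ¬ f.SameCycle x y} : Finset α).toList.map f

theorem mem_cycleCode_iff {f : Perm α} {x y : α} : y ∈ f.cycleCode x ↔ y ≠ x := by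
  have hrest : y ∈ ({y | ¬ f.SameCycle x y} : Finset α).toList.map f ↔ ¬ f.SameCycle x y := by
    simp only [List.mem_map, mem_toList, mem_filter, mem_univ, true_and]
    exact ⟨fun ⟨z, hz, hzy⟩ => hzy ▸ sameCycle_apply_right.not.2 hz,
      fun hy => ⟨f.symm y, sameCycle_apply_right.not.1 (by simpa using hy), by simp⟩⟩
  rw [cycleCode, List.mem_append, hrest, mem_tail_toList_iff]
  constructor
  · rintro (⟨-, hne⟩ | hy)
    exacts [hne, fun h => hy (h ▸ SameCycle.rfl)]
  · intro hne
    by_cases hy : f.SameCycle x y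
    exacts [Or.inl ⟨hy, hne⟩, Or.inr hy]

theorem nodup_cycleCode (f : Perm α) (x : α) : (f.cycleCode x).Nodup := by
  refine List.nodup_append.2 ⟨(nodup_toList f x).tail,
    (Finset.nodup_toList _).map f.injective, fun y hy z hz hyz => ?_⟩
  obtain ⟨w, hw, rfl⟩ := List.mem_map.1 hz
  rw [mem_toList, mem_filter] at hw
  exact hw.2 (sameCycle_apply_right.1 (hyz ▸ (mem_tail_toList_iff.1 hy).1))

theorem cycleCode_perm (f : Perm α) (x : α) : (f.cycleCode x).Perm (univ.erase x).toList :=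
  (List.perm_ext_iff_of_nodup (nodup_cycleCode f x) (Finset.nodup_toList _)).2 fun y => by
    rw [mem_cycleCode_iff, Finset.mem_toList, mem_erase, and_iff_left (mem_univ y)]

theorem eq_of_cycleCode_eq {f g : Perm α} {x : α}
    (hord : orderOf (f.cycleOf x) = orderOf (g.cycleOf x))
    (hcode : f.cycleCode x = g.cycleCode x) : f = g := by
  have hlen : (f.toList x).tail.length = (g.toList x).tail.length := by
    have := length_tail_toList_add_one f x
    have := length_tail_toList_add_one g x
    omega
  obtain ⟨htail, hrest⟩ := List.append_inj hcode hlen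
  have hcyc : f.cycleOf x = g.cycleOf x := by
    rw [← formPerm_cons_tail_toList, htail, formPerm_cons_tail_toList]
  have hsame : ∀ y, f.SameCycle x y ↔ g.SameCycle x y := fun y => by
    rw [← sameCycle_cycleOf_iff, hcyc, sameCycle_cycleOf_iff]
  have hoff : ({y | ¬ f.SameCycle x y} : Finset α) = ({y | ¬ g.SameCycle x y} : Finset α) :=
    filter_congr fun y _ => (hsame y).not
  rw [hoff] at hrest
  ext y
  by_cases hy : f.SameCycle x y
  · rw [← hy.cycleOf_apply, hcyc, ((hsame y).1 hy).cycleOf_apply]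
  · refine List.map_inj_left.1 hrest y ?_
    simpa [hsame] using hy

theorem card_filter_orderOf_dvd_le (x : α) {m : ℕ} (hm : m ≠ 0) :
    #{f : Perm α | orderOf f ∣ m} ≤ #m.divisors * (Fintype.card α - 1)! := by
  let S := (univ.erase x).toList
  calc #{f : Perm α | orderOf f ∣ m}
      ≤ #(m.divisors ×ˢ S.permutations.toFinset) := by
        refine card_le_card_of_injOn (fun f => (orderOf (f.cycleOf x), f.cycleCode x)) ?_ ?_
        · intro f hf
          have hdvd := (orderOf_cycleOf_dvd_orderOf f x).trans (mem_filter.1 (mem_coe.1 hf)).2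
          exact mem_product.2 ⟨Nat.mem_divisors.2 ⟨hdvd, hm⟩,
            List.mem_toFinset.2 (List.mem_permutations.2 (cycleCode_perm f x))⟩
        · intro f _ g _ hfg
          exact eq_of_cycleCode_eq (Prod.ext_iff.1 hfg).1 (Prod.ext_iff.1 hfg).2
    _ ≤ #m.divisors * (Fintype.card α - 1)! := by
        rw [card_product]
        gcongr
        refine (List.toFinset_card_le _).trans_eq ?_
        rw [List.length_permutations, Finset.length_toList, card_erase_of_mem (mem_univ x),
          Finset.card_univ]

end Equiv.Perm

theorem stmt_2 (n m : ℕ) (hn : 0 < n) (hm : 0 < m) :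
    Nat.card {π : Equiv.Perm (Fin n) // orderOf π ∣ m} ≤
      m.divisors.card * Nat.factorial (n - 1) := by
  rw [Nat.card_eq_fintype_card, Fintype.card_subtype]
  simpa using Equiv.Perm.card_filter_orderOf_dvd_le (⟨0, hn⟩ : Fin n) hm.ne'
end

section
/- Let n ≥ 16 and let m be a positive integer with m ≤ n^{4/3}. Then m has at most one divisor d satisfying n - √n < d ≤ n. -/
/-!
Suppose `d₁ < d₂` are two divisors of `m` in `(n - √n, n]`. Then `gcd d₁ d₂` divides `d₂ - d₁`
and `lcm d₁ d₂` divides `m`, so `d₁ d₂ = gcd · lcm ≤ (d₂ - d₁) m < √n · n^{4/3}`. With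
`x = n^{1/6}` and `d₁ > x⁶ - x³` this forces `x¹² - x⁹ < x¹¹`, i.e. `x³ < x² + 1`, which fails
once `x ≥ 3/2`, in particular for `n ≥ 16`.
-/

theorem Nat.mul_le_sub_mul_of_dvd {a b m : ℕ} (hab : a < b) (ha : a ∣ m) (hb : b ∣ m)
    (hm : 0 < m) : a * b ≤ (b - a) * m := by
  have hgcd : Nat.gcd a b ≤ b - a :=
    Nat.le_of_dvd (by omega) (Nat.dvd_sub (Nat.gcd_dvd_right a b) (Nat.gcd_dvd_left a b))
  have hlcm : Nat.lcm a b ≤ m := Nat.le_of_dvd hm (Nat.lcm_dvd ha hb)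
  calc a * b = Nat.gcd a b * Nat.lcm a b := (Nat.gcd_mul_lcm a b).symm
    _ ≤ (b - a) * m := Nat.mul_le_mul hgcd hlcm

theorem sub_mul_pow_eight_lt_mul {x a b : ℝ} (hx : 3 / 2 ≤ x) (ha : x ^ 6 - x ^ 3 < a)
    (hab : a < b) (hb : b ≤ x ^ 6) : (b - a) * x ^ 8 < a * b := by
  by_contra! h
  have hx1 : 1 ≤ x := by linarith
  have hgap : b - a < x ^ 3 := by linarith
  have hx36 : x ^ 3 ≤ x ^ 6 := pow_le_pow_right₀ hx1 (by norm_num)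
  have hx68 : x ^ 6 ≤ x ^ 8 := pow_le_pow_right₀ hx1 (by norm_num)
  have hcube : 0 ≤ x ^ 3 - x ^ 2 - 1 := by nlinarith [sq_nonneg (x - 3 / 2)]
  have hsq : a ^ 2 < x ^ 3 * (x ^ 8 - a) :=
    calc a ^ 2 ≤ (b - a) * (x ^ 8 - a) := by nlinarith
      _ < x ^ 3 * (x ^ 8 - a) := mul_lt_mul_of_pos_right hgap (by linarith)
  have hlow : (x ^ 6 - x ^ 3) ^ 2 + x ^ 3 * (x ^ 6 - x ^ 3) < a ^ 2 + x ^ 3 * a := by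
    have hpos : 0 ≤ x ^ 6 - x ^ 3 := by linarith
    nlinarith [pow_pos (by linarith : (0 : ℝ) < x) 3]
  nlinarith [mul_nonneg (pow_pos (by linarith : (0 : ℝ) < x) 9).le hcube]

theorem sub_mul_rpow_lt_mul {n a b : ℝ} (hn : 16 ≤ n) (ha : n - √n < a) (hab : a < b)
    (hb : b ≤ n) : (b - a) * n ^ ((4 : ℝ) / 3) < a * b := by
  have hn0 : 0 ≤ n := by linarith
  set x := n ^ ((1 : ℝ) / 6)
  have hpow (k : ℕ) : x ^ k = n ^ ((k : ℝ) / 6) := by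
    rw [← Real.rpow_natCast, ← Real.rpow_mul hn0]
    ring_nf
  have hx6 : x ^ 6 = n := by rw [hpow]; norm_num
  have hx3 : x ^ 3 = √n := by rw [hpow, Real.sqrt_eq_rpow]; norm_num
  have hx8 : x ^ 8 = n ^ ((4 : ℝ) / 3) := by rw [hpow]; norm_num
  have hx : 3 / 2 ≤ x :=
    le_of_pow_le_pow_left₀ (n := 6) (by norm_num) (Real.rpow_nonneg hn0 _)
      (by rw [hx6]; linarith)
  rw [← hx8]
  exact sub_mul_pow_eight_lt_mul hx (by rwa [hx6, hx3]) hab (by rwa [hx6])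

theorem not_lt_of_dvd_of_sub_sqrt_lt {n m a b : ℕ} (hn : 16 ≤ n) (hm : 0 < m)
    (hmn : (m : ℝ) ≤ (n : ℝ) ^ ((4 : ℝ) / 3)) (ha : a ∣ m) (hb : b ∣ m)
    (hna : (n : ℝ) - √n < a) (hbn : b ≤ n) : ¬ a < b := by
  intro hab
  have hdvd : ((a * b : ℕ) : ℝ) ≤ ((b - a) * m : ℕ) := by
    exact_mod_cast Nat.mul_le_sub_mul_of_dvd hab ha hb hm
  push_cast [hab.le] at hdvd
  have hclose := sub_mul_rpow_lt_mul (by exact_mod_cast hn) hna (b := b) (by exact_mod_cast hab)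
    (by exact_mod_cast hbn)
  have hgap : (0 : ℝ) ≤ b - a := sub_nonneg.2 (by exact_mod_cast hab.le)
  linarith [mul_le_mul_of_nonneg_left hmn hgap]

theorem stmt_4 (n m : ℕ) (hn : 16 ≤ n) (hm : 0 < m)
    (hmn : (m : ℝ) ≤ (n : ℝ) ^ ((4 : ℝ) / 3)) :
    ∀ d₁ d₂ : ℕ, d₁ ∣ m → d₂ ∣ m →
      (n : ℝ) - Real.sqrt n < d₁ → d₁ ≤ n →
      (n : ℝ) - Real.sqrt n < d₂ → d₂ ≤ n → d₁ = d₂ := by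
  intro d₁ d₂ h₁ h₂ hl₁ hu₁ hl₂ hu₂
  exact le_antisymm
    (not_lt.1 (not_lt_of_dvd_of_sub_sqrt_lt hn hm hmn h₂ h₁ hl₂ hu₁))
    (not_lt.1 (not_lt_of_dvd_of_sub_sqrt_lt hn hm hmn h₁ h₂ hl₁ hu₂))
end

section
/- For every integer k ≥ 1, lcm(1, 2, ..., k) ≥ 2^{k-1}. -/
/-!
For a prime `p` and `0 < k ≤ n`, the `p`-adic valuation of `C(n, k)` counts the carries in the
base-`p` addition `k + (n - k)`, and no carry occurs at a position `i` with `p ^ i ∣ k`; hence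
`v_p(k * C(n, k)) ≤ log_p n = v_p(lcm(1, …, n))`, i.e. `k * C(n, k) ∣ lcm(1, …, n)`.
Taking `n = m + 1` and `k = m / 2 + 1` gives `(m + 1) * C(m, m / 2) ∣ lcm(1, …, m + 1)`, and
`(m + 1) * C(m, m / 2) ≥ ∑ᵢ C(m, i) = 2 ^ m`.
-/

open Finset

namespace Nat

theorem factorization_choose_add_factorization_le_log {p n k : ℕ} (hp : p.Prime) (hkn : k ≤ n)
    (hk0 : k ≠ 0) : (choose n k).factorization p + k.factorization p ≤ log p n := by
  have hdisj : Disjoint {i ∈ Ico 1 (log p n + 1) | p ^ i ≤ k % p ^ i + (n - k) % p ^ i}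
      {i ∈ Ico 1 (log p n + 1) | p ^ i ∣ k} := by
    simp +contextual [Finset.disjoint_right, dvd_iff_mod_eq_zero, Nat.mod_lt _ (pow_pos hp.pos _)]
  have hk : k < p ^ (log p n + 1) := hkn.trans_lt (lt_pow_succ_log_self hp.one_lt n)
  rw [factorization_choose hp hkn (lt_succ_self _),
    factorization_eq_card_pow_dvd_of_lt hp (pos_of_ne_zero hk0) hk,
    ← card_union_of_disjoint hdisj, filter_union_right]
  exact (card_filter_le ..).trans_eq (card_Ico _ _)

theorem mul_choose_dvd_lcmUpto {n k : ℕ} (hkn : k ≤ n) (hk0 : k ≠ 0) :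
    k * choose n k ∣ lcmUpto n := by
  have hchoose : choose n k ≠ 0 := (choose_pos hkn).ne'
  rw [← factorization_prime_le_iff_dvd (mul_ne_zero hk0 hchoose) (lcmUpto_ne_zero n)]
  intro p hp
  rw [factorization_lcmUpto n hp, factorization_mul hk0 hchoose, Finsupp.add_apply, add_comm]
  exact factorization_choose_add_factorization_le_log hp hkn hk0

theorem two_pow_le_add_one_mul_choose_half (n : ℕ) : 2 ^ n ≤ (n + 1) * n.choose (n / 2) :=
  calc 2 ^ n = ∑ i ∈ range (n + 1), n.choose i := (sum_range_choose n).symm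
    _ ≤ ∑ _i ∈ range (n + 1), n.choose (n / 2) := sum_le_sum fun i _ => choose_le_middle i n
    _ = (n + 1) * n.choose (n / 2) := by rw [sum_const, card_range, smul_eq_mul]

theorem two_pow_le_lcmUpto_add_one (n : ℕ) : 2 ^ n ≤ lcmUpto (n + 1) := by
  have hdvd : (n + 1) * n.choose (n / 2) ∣ lcmUpto (n + 1) := by
    rw [add_one_mul_choose_eq, mul_comm]
    exact mul_choose_dvd_lcmUpto (by omega) (succ_ne_zero _)
  exact (two_pow_le_add_one_mul_choose_half n).trans (le_of_dvd (lcmUpto_pos _) hdvd)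

end Nat

theorem stmt_5_general (k : ℕ) :
    2 ^ (k - 1) ≤ (Finset.Icc 1 k).lcm id := by
  cases k with
  | zero => simp
  | succ n => exact Nat.two_pow_le_lcmUpto_add_one n

theorem stmt_5 (k : ℕ) (hk : 1 ≤ k) :
    2 ^ (k - 1) ≤ (Finset.Icc 1 k).lcm id :=
  stmt_5_general k
end

section
/- For any positive integers n, ℓ, m, the number of permutations of {1, ..., n} having exactly ℓ cycles and order dividing m is at most (n-1)!/(ℓ-1)! · (σ(m)/m)^{ℓ-1}, where σ(m) is the sum of divisors of m. -/
/-!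
Count by an injection. Write `ℓ = L + 1`. Given `π` with `ℓ` cycles and order dividing `m`, a
point `x`, a permutation `g` ordering the `L` cycles not containing `x`, and `r : Fin L → Fin m`,
list the points cycle by cycle: first the cycle of `x` starting at `x`, then the other cycles in
the order `g`, the `j`-th one starting at `π ^ r j` applied to its least element. This listing,
read as a permutation of the `n` points, together with the lengths `c j ∣ m` of the later cycles
and the quotients `r j / c j < m / c j`, determines everything: `π` shifts each block cyclically,
and the block starts give back `x`, `g` and `r j % c j`. As `∑ d ∣ m, m / d = σ(m)`, comparing
cardinalities gives `#{π} * n * L! * m ^ L ≤ n! * σ(m) ^ L`.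
-/

open Equiv Finset

section ReindexBlocks

variable {α ι : Type*} [Fintype α] [Fintype ι]

/-- The identification of `α` with the blocks depends on `b` alone, so `f` can be read back from
`reindexBlocks b f`; when the cardinalities differ the junk value is `id`. -/
noncomputable def reindexBlocks (b : ι → ℕ) (f : (Σ i, Fin (b i)) → α) : α → α :=
  if h : Fintype.card α = Fintype.card (Σ i, Fin (b i)) then f ∘ Fintype.equivOfCardEq h else id

variable {b : ι → ℕ}

lemma reindexBlocks_injective (h : Fintype.card α = Fintype.card (Σ i, Fin (b i))) :
    Function.Injective (reindexBlocks (α := α) b) := by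
  intro f f' hf
  simp only [reindexBlocks, dif_pos h] at hf
  exact (Fintype.equivOfCardEq h).surjective.injective_comp_right hf

lemma bijective_reindexBlocks (h : Fintype.card α = Fintype.card (Σ i, Fin (b i)))
    {f : (Σ i, Fin (b i)) → α} (hf : Function.Bijective f) :
    Function.Bijective (reindexBlocks b f) := by
  rw [reindexBlocks, dif_pos h]
  exact hf.comp (Equiv.bijective _)

end ReindexBlocks

namespace Equiv.Perm

section CycleFinset

variable {α : Type*} [Fintype α] [DecidableEq α] (π : Perm α)

def cycleFinset (y : α) : Finset α := univ.filter (π.SameCycle y)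

variable {π}

@[simp]
lemma mem_cycleFinset {y z : α} : z ∈ π.cycleFinset y ↔ π.SameCycle y z := by
  simp [cycleFinset]

lemma SameCycle.cycleFinset_eq {y z : α} (h : π.SameCycle y z) :
    π.cycleFinset y = π.cycleFinset z := by
  ext w
  simp only [mem_cycleFinset]
  exact ⟨h.symm.trans, h.trans⟩

variable (π)

lemma self_mem_cycleFinset (y : α) : y ∈ π.cycleFinset y :=
  mem_cycleFinset.2 SameCycle.rfl

lemma card_cycleFinset_pos (y : α) : 0 < #(π.cycleFinset y) :=
  card_pos.2 ⟨y, π.self_mem_cycleFinset y⟩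

lemma isCycleOn_cycleFinset (y : α) : π.IsCycleOn (π.cycleFinset y) := by
  refine ⟨⟨fun z hz => ?_, π.injective.injOn,
    fun z hz => ⟨π.symm z, ?_, π.apply_symm_apply z⟩⟩, fun a ha b hb => ?_⟩
  · simpa [sameCycle_apply_right] using hz
  · simpa [sameCycle_symm_apply_right] using hz
  · exact (mem_cycleFinset.1 ha).symm.trans (mem_cycleFinset.1 hb)

lemma card_cycleFinset_dvd {m : ℕ} (h : orderOf π ∣ m) (y : α) :
    #(π.cycleFinset y) ∣ m := by
  rw [← (π.isCycleOn_cycleFinset y).pow_apply_eq (π.self_mem_cycleFinset y),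
    orderOf_dvd_iff_pow_eq_one.1 h, one_apply]

lemma eq_of_pow_apply_eq_of_div_eq {y : α} {k k' : ℕ} (h : (π ^ k) y = (π ^ k') y)
    (hdiv : k / #(π.cycleFinset y) = k' / #(π.cycleFinset y)) : k = k' := by
  have hmod := ((π.isCycleOn_cycleFinset y).pow_apply_eq_pow_apply
    (π.self_mem_cycleFinset y)).1 h
  rw [← Nat.div_add_mod k #(π.cycleFinset y), ← Nat.div_add_mod k' #(π.cycleFinset y), hdiv,
    hmod]

end CycleFinset

section Listing

variable {α ι : Type*} [Fintype α] [DecidableEq α] (π : Perm α) (s : ι → α)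

def IsCycleTransversal : Prop := ∀ y, ∃! i, π.SameCycle (s i) y

def listing (b : ι → ℕ) (p : Σ i, Fin (b i)) : α := (π ^ (p.2 : ℕ)) (s p.1)

variable {π s} {b : ι → ℕ}

lemma listing_bijective (hs : IsCycleTransversal π s)
    (hb : ∀ i, #(π.cycleFinset (s i)) = b i) : Function.Bijective (listing π s b) := by
  constructor
  · rintro ⟨i, k⟩ ⟨j, k'⟩ h
    simp only [listing] at h
    obtain rfl : i = j := by
      have h' : π.SameCycle ((π ^ (k : ℕ)) (s i)) ((π ^ (k' : ℕ)) (s j)) :=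
        h ▸ SameCycle.rfl
      exact (hs (s j)).unique
        (by simpa only [sameCycle_pow_left, sameCycle_pow_right] using h') SameCycle.rfl
    have hmod := ((π.isCycleOn_cycleFinset (s i)).pow_apply_eq_pow_apply
      (π.self_mem_cycleFinset (s i))).1 h
    rw [hb] at hmod
    obtain rfl : k = k' := Fin.ext (hmod.eq_of_lt_of_lt k.2 k'.2)
    rfl
  · intro y
    obtain ⟨i, hi, -⟩ := hs y
    obtain ⟨k, hk, rfl⟩ := (π.isCycleOn_cycleFinset (s i)).exists_pow_eq
      (π.self_mem_cycleFinset (s i)) (mem_cycleFinset.2 hi)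
    exact ⟨⟨i, k, hb i ▸ hk⟩, rfl⟩

lemma IsCycleTransversal.sum_card_cycleFinset [Fintype ι] (hs : IsCycleTransversal π s) :
    ∑ i, #(π.cycleFinset (s i)) = Fintype.card α := by
  simpa using Fintype.card_of_bijective (listing_bijective (b := _) hs fun _ => rfl)

lemma apply_listing (hb : ∀ i, #(π.cycleFinset (s i)) = b i) (i : ι) (k : Fin (b i)) :
    π (listing π s b ⟨i, k⟩) =
      listing π s b ⟨i, ⟨(k + 1) % b i, Nat.mod_lt _ k.pos⟩⟩ := by
  simp only [listing]
  rw [← mul_apply, ← pow_succ', ((π.isCycleOn_cycleFinset (s i)).pow_apply_eq_pow_apply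
    (π.self_mem_cycleFinset (s i))).2]
  rw [hb]
  exact (Nat.mod_modEq _ _).symm

lemma eq_of_listing_eq {π' : Perm α} {s' : ι → α} (hs : IsCycleTransversal π s)
    (hb : ∀ i, #(π.cycleFinset (s i)) = b i) (hb' : ∀ i, #(π'.cycleFinset (s' i)) = b i)
    (h : listing π s b = listing π' s' b) : π = π' ∧ s = s' := by
  refine ⟨Equiv.ext fun y => ?_, funext fun i => ?_⟩
  · obtain ⟨⟨i, k⟩, rfl⟩ := (listing_bijective hs hb).2 y
    rw [apply_listing hb, h, apply_listing hb']
  · have hpos : 0 < b i := hb i ▸ π.card_cycleFinset_pos (s i)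
    simpa [listing] using congrFun h ⟨i, 0, hpos⟩

end Listing

section CycleRep

variable {α : Type*} [Fintype α] [LinearOrder α] (π : Perm α)

def cycleRep (y : α) : α := (π.cycleFinset y).min' ⟨y, π.self_mem_cycleFinset y⟩

def cycleReps : Finset α := univ.filter fun y => π.cycleRep y = y

lemma sameCycle_cycleRep (y : α) : π.SameCycle y (π.cycleRep y) :=
  mem_cycleFinset.1 (min'_mem _ _)

variable {π}

lemma cycleRep_eq_cycleRep_iff {y z : α} : π.cycleRep y = π.cycleRep z ↔ π.SameCycle y z := by
  refine ⟨fun h => (π.sameCycle_cycleRep y).trans (h ▸ (π.sameCycle_cycleRep z).symm),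
    fun h => ?_⟩
  unfold cycleRep
  congr 1
  exact h.cycleFinset_eq

lemma mem_cycleReps {y : α} : y ∈ π.cycleReps ↔ π.cycleRep y = y := by
  simp [cycleReps]

variable (π)

lemma cycleRep_mem_cycleReps (y : α) : π.cycleRep y ∈ π.cycleReps :=
  mem_cycleReps.2 (cycleRep_eq_cycleRep_iff.2 (π.sameCycle_cycleRep y).symm)

lemma cycleRep_pow_apply (y : α) (k : ℕ) : π.cycleRep ((π ^ k) y) = π.cycleRep y :=
  cycleRep_eq_cycleRep_iff.2 (sameCycle_pow_left.2 SameCycle.rfl)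

lemma card_cycleReps_filter_mem_support :
    #(π.cycleReps.filter (· ∈ π.support)) = π.cycleType.card := by
  rw [cycleType_def, Multiset.card_map, ← card_def]
  refine card_bij (fun r _ => π.cycleOf r) (fun r hr => ?_) (fun r hr r' hr' h => ?_)
    (fun c hc => ?_)
  · exact cycleOf_mem_cycleFactorsFinset_iff.2 (mem_filter.1 hr).2
  · simp only [mem_filter, mem_cycleReps] at hr hr'
    rw [← hr.1, ← hr'.1, cycleRep_eq_cycleRep_iff,
      sameCycle_iff_cycleOf_eq_of_mem_support hr.2 hr'.2]
    exact h
  · obtain ⟨a, ha⟩ := (mem_cycleFactorsFinset_iff.1 hc).1.nonempty_support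
    have hrep := π.sameCycle_cycleRep a
    refine ⟨π.cycleRep a, mem_filter.2 ⟨π.cycleRep_mem_cycleReps a, ?_⟩, ?_⟩
    · exact hrep.mem_support_iff.1 (mem_cycleFactorsFinset_support_le hc ha)
    · rw [cycle_is_cycleOf ha hc, hrep.cycleOf_eq]

lemma cycleReps_filter_not_mem_support :
    π.cycleReps.filter (· ∉ π.support) = π.supportᶜ := by
  ext y
  simp only [mem_filter, mem_compl, mem_cycleReps, and_iff_right_iff_imp]
  intro hy
  exact ((π.sameCycle_cycleRep y).eq_of_left (notMem_support.1 hy)).symm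

lemma card_cycleReps :
    #π.cycleReps = π.cycleType.card + (Fintype.card α - π.cycleType.sum) := by
  rw [← card_filter_add_card_filter_not (· ∈ π.support), card_cycleReps_filter_mem_support,
    cycleReps_filter_not_mem_support, card_compl, sum_cycleType]

lemma IsCycleTransversal.of_cycleRep {ι : Type*} {s : ι → α}
    (hinj : Function.Injective (π.cycleRep ∘ s))
    (hsurj : ∀ y, ∃ i, π.cycleRep (s i) = π.cycleRep y) : IsCycleTransversal π s := by
  intro y
  obtain ⟨i, hi⟩ := hsurj y
  refine ⟨i, cycleRep_eq_cycleRep_iff.1 hi, fun j hj => hinj ?_⟩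
  exact (cycleRep_eq_cycleRep_iff.2 hj).trans hi.symm

end CycleRep

section ListingPerm

variable {α : Type*} [Fintype α] [DecidableEq α] {L : ℕ}

def cycleSizes (π : Perm α) (s : Fin (L + 1) → α) (j : Fin L) : ℕ :=
  #(π.cycleFinset (s j.succ))

/-- Block `0` gets whatever the other blocks leave over, so that it need not be recorded. -/
def blockSizes (n : ℕ) (c : Fin L → ℕ) : Fin (L + 1) → ℕ := Fin.cons (n - ∑ j, c j) c

lemma card_cycleFinset_eq_blockSizes {π : Perm α} {s : Fin (L + 1) → α}
    (hs : IsCycleTransversal π s) (i : Fin (L + 1)) :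
    #(π.cycleFinset (s i)) = blockSizes (Fintype.card α) (cycleSizes π s) i := by
  have hsum := hs.sum_card_cycleFinset
  rw [Fin.sum_univ_succ] at hsum
  cases i using Fin.cases with
  | zero => simp only [blockSizes, Fin.cons_zero, cycleSizes]; omega
  | succ j => rfl

noncomputable def listingPerm (π : Perm α) (s : Fin (L + 1) → α)
    (hs : IsCycleTransversal π s) : Perm α :=
  have hbij := listing_bijective hs (card_cycleFinset_eq_blockSizes hs)
  Equiv.ofBijective _ (bijective_reindexBlocks (Fintype.card_of_bijective hbij).symm hbij)

lemma eq_of_listingPerm_eq {π π' : Perm α} {s s' : Fin (L + 1) → α}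
    (hs : IsCycleTransversal π s) (hs' : IsCycleTransversal π' s')
    (hc : cycleSizes π s = cycleSizes π' s')
    (h : listingPerm π s hs = listingPerm π' s' hs') : π = π' ∧ s = s' := by
  have hbij := listing_bijective hs (card_cycleFinset_eq_blockSizes hs)
  have hf := congrArg DFunLike.coe h
  simp only [listingPerm, coe_ofBijective] at hf
  rw [← hc] at hf
  refine eq_of_listing_eq hs (card_cycleFinset_eq_blockSizes hs) ?_
    (reindexBlocks_injective (Fintype.card_of_bijective hbij).symm hf)
  simpa only [hc] using card_cycleFinset_eq_blockSizes hs'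

end ListingPerm

end Equiv.Perm

namespace PermOrderDvd

open Equiv.Perm

variable {α : Type*} [Fintype α] [LinearOrder α] {L m : ℕ}

def otherCycleReps (π : Perm α) (x : α) : Finset α := π.cycleReps.erase (π.cycleRep x)

lemma card_otherCycleReps {π : Perm α} (hπ : #π.cycleReps = L + 1) (x : α) :
    #(otherCycleReps π x) = L := by
  rw [otherCycleReps, card_erase_of_mem (π.cycleRep_mem_cycleReps x), hπ, Nat.add_sub_cancel]

def startPoints (π : Perm α) (x : α) (g : Perm (Fin L)) (r : Fin L → Fin m)
    (h : #(otherCycleReps π x) = L) : Fin (L + 1) → α :=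
  Fin.cons x fun j => (π ^ (r j : ℕ)) ((otherCycleReps π x).orderEmbOfFin h (g j))

section

variable (π : Perm α) (x : α) (g : Perm (Fin L)) (r : Fin L → Fin m)
  (h : #(otherCycleReps π x) = L)

lemma startPoints_succ (j : Fin L) : startPoints π x g r h j.succ =
    (π ^ (r j : ℕ)) ((otherCycleReps π x).orderEmbOfFin h (g j)) := rfl

lemma cycleRep_startPoints_succ (j : Fin L) :
    π.cycleRep (startPoints π x g r h j.succ) = (otherCycleReps π x).orderEmbOfFin h (g j) := by
  rw [startPoints_succ, cycleRep_pow_apply, ← mem_cycleReps]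
  exact mem_of_mem_erase (orderEmbOfFin_mem _ h _)

lemma isCycleTransversal_startPoints : IsCycleTransversal π (startPoints π x g r h) := by
  have hrep : π.cycleRep ∘ startPoints π x g r h =
      Fin.cons (π.cycleRep x) fun j => (otherCycleReps π x).orderEmbOfFin h (g j) := by
    ext i
    cases i using Fin.cases with
    | zero => rfl
    | succ j => exact cycleRep_startPoints_succ π x g r h j
  refine IsCycleTransversal.of_cycleRep (π := π) ?_ fun y => ?_
  · rw [hrep, Fin.cons_injective_iff]
    refine ⟨fun ⟨j, hj⟩ => ?_,
      ((otherCycleReps π x).orderEmbOfFin h).injective.comp g.injective⟩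
    exact ne_of_mem_erase (orderEmbOfFin_mem _ h (g j)) hj
  · by_cases hy : π.cycleRep y = π.cycleRep x
    · exact ⟨0, hy.symm⟩
    · have hmem : π.cycleRep y ∈ otherCycleReps π x :=
        mem_erase.2 ⟨hy, π.cycleRep_mem_cycleReps y⟩
      obtain ⟨k, hk⟩ : π.cycleRep y ∈ Set.range ((otherCycleReps π x).orderEmbOfFin h) := by
        rwa [range_orderEmbOfFin]
      refine ⟨(g.symm k).succ, ?_⟩
      rw [cycleRep_startPoints_succ, apply_symm_apply, hk]

lemma cycleSizes_startPoints (j : Fin L) :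
    cycleSizes π (startPoints π x g r h) j =
      #(π.cycleFinset ((otherCycleReps π x).orderEmbOfFin h (g j))) := by
  rw [cycleSizes, startPoints_succ, (sameCycle_pow_left.2 SameCycle.rfl).cycleFinset_eq]

end

noncomputable def encode (hm : m ≠ 0)
    (π : {π : Perm α // #π.cycleReps = L + 1 ∧ orderOf π ∣ m}) (x : α) (g : Perm (Fin L))
    (r : Fin L → Fin m) :
    Perm α × (Fin L → Σ d : m.divisors, Fin (m / d)) :=
  let s := startPoints π.1 x g r (card_otherCycleReps π.2.1 x)
  have hdvd (j : Fin L) : cycleSizes π.1 s j ∣ m := π.1.card_cycleFinset_dvd π.2.2 _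
  (listingPerm π.1 s (isCycleTransversal_startPoints π.1 x g r _),
    fun j => ⟨⟨cycleSizes π.1 s j, Nat.mem_divisors.2 ⟨hdvd j, hm⟩⟩,
      ⟨(r j : ℕ) / cycleSizes π.1 s j, Nat.div_lt_div_of_lt_of_dvd (hdvd j) (r j).2⟩⟩)

theorem encode_injective (hm : m ≠ 0) :
    Function.Injective fun a : {π : Perm α // #π.cycleReps = L + 1 ∧ orderOf π ∣ m} × α ×
      Perm (Fin L) × (Fin L → Fin m) => encode hm a.1 a.2.1 a.2.2.1 a.2.2.2 := by
  rintro ⟨⟨π, hπ⟩, x, g, r⟩ ⟨⟨π', hπ'⟩, x', g', r'⟩ h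
  simp only [encode, Prod.mk.injEq] at h
  obtain ⟨hE, hD⟩ := h
  have hc := funext fun j => congrArg (fun p => (p.1 : ℕ)) (congrFun hD j)
  have hq (j : Fin L) := congrArg (fun p => (p.2 : ℕ)) (congrFun hD j)
  obtain ⟨rfl, hs⟩ := eq_of_listingPerm_eq _ _ hc hE
  obtain rfl : x = x' := congrFun hs 0
  obtain rfl : g = g' := by
    refine Equiv.ext fun j =>
      ((otherCycleReps π x).orderEmbOfFin (card_otherCycleReps hπ.1 x)).injective ?_
    simpa only [cycleRep_startPoints_succ] using congrArg π.cycleRep (congrFun hs j.succ)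
  obtain rfl : r = r' := by
    refine funext fun j => Fin.ext (π.eq_of_pow_apply_eq_of_div_eq (congrFun hs j.succ) ?_)
    simpa only [cycleSizes_startPoints] using hq j
  rfl

open Nat in
theorem card_mul_le_factorial_mul_sum_divisors_pow (hm : m ≠ 0) :
    Nat.card {π : Perm α // #π.cycleReps = L + 1 ∧ orderOf π ∣ m} *
        (Fintype.card α * (L ! * m ^ L)) ≤
      (Fintype.card α)! * (∑ d ∈ m.divisors, d) ^ L := by
  have hdiv : Fintype.card (Σ d : m.divisors, Fin (m / d)) = ∑ d ∈ m.divisors, d := by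
    rw [Fintype.card_sigma]
    simp only [Fintype.card_fin]
    rw [sum_coe_sort m.divisors (m / ·)]
    exact Nat.sum_div_divisors m id
  have := Nat.card_le_card_of_injective _ (encode_injective (α := α) (L := L) hm)
  simpa only [Nat.card_eq_fintype_card, Fintype.card_prod, Fintype.card_perm, Fintype.card_fin,
    Fintype.card_fun, hdiv] using this

end PermOrderDvd

theorem stmt_13 (n ℓ m : ℕ) (hn : 0 < n) (hℓ : 0 < ℓ) (hm : 0 < m) :
    (Nat.card {π : Equiv.Perm (Fin n) //
        π.cycleType.card + (n - π.cycleType.sum) = ℓ ∧ orderOf π ∣ m} : ℝ) ≤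
      Nat.factorial (n - 1) / Nat.factorial (ℓ - 1) *
        ((∑ d ∈ m.divisors, (d : ℝ)) / m) ^ (ℓ - 1) := by
  obtain ⟨L, rfl⟩ := Nat.exists_eq_add_one_of_ne_zero hℓ.ne'
  have hcount :=
    PermOrderDvd.card_mul_le_factorial_mul_sum_divisors_pow (α := Fin n) (L := L) hm.ne'
  rw [Fintype.card_fin, ← Nat.mul_factorial_pred hn.ne', mul_left_comm, mul_assoc] at hcount
  have hcycles : Nat.card {π : Equiv.Perm (Fin n) //
      π.cycleType.card + (n - π.cycleType.sum) = L + 1 ∧ orderOf π ∣ m} =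
      Nat.card {π : Equiv.Perm (Fin n) // #π.cycleReps = L + 1 ∧ orderOf π ∣ m} :=
    Nat.card_congr (Equiv.subtypeEquivRight fun π => by
      rw [Equiv.Perm.card_cycleReps, Fintype.card_fin])
  rw [hcycles, Nat.add_sub_cancel, div_pow, div_mul_div_comm, le_div_iff₀ (by positivity),
    ← Nat.cast_sum]
  exact_mod_cast Nat.le_of_mul_le_mul_left hcount hn
end

section
/- For any positive integers n and q with q ≥ 2, the number of permutations of {1, ..., n} having no cycle of length divisible by q equals n! · ∏_{j=1}^{⌊n/q⌋} (1 - 1/(jq)). -/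
/-!
Write `a n` for the number of such permutations of `Fin n` and `ρ n` for the product, so that the
claim is `a n = n! ρ n`. Splitting off the cycle through a fixed point, of length `ℓ`, gives
`a n = ∑_{1 ≤ ℓ ≤ n, q ∤ ℓ} (n - 1)! / (n - ℓ)! · a (n - ℓ)`; the number `(n - 1)! / (n - ℓ)!` of
`ℓ`-cycles through a given point comes from the total number of `ℓ`-cycles by symmetry and double
counting. It remains to see that `ρ` satisfies the matching identity
`n ρ n = ∑_{1 ≤ ℓ ≤ n, q ∤ ℓ} ρ (n - ℓ)`. As `ρ` is constant on the blocks `[iq, iq + q)`, the right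
side is `∑_{k < n} ρ k - ∑_{i < n / q} ρ (iq)`, and both sides grow by `ρ n` from `n` to `n + 1`
when `q ∤ n + 1`, and by `0` when `q ∣ n + 1`, because then `(n + 1) ρ (n + 1) = n ρ n`.
-/
open Finset

namespace Equiv.Perm

variable {α β : Type*} [Fintype α] [DecidableEq α] [Fintype β] [DecidableEq β] {q : ℕ}

def NoCycleLengthDvd (q : ℕ) (π : Perm α) : Prop := ∀ c ∈ π.cycleType, ¬ q ∣ c

instance : DecidablePred (NoCycleLengthDvd (α := α) q) := fun π =>
  inferInstanceAs (Decidable (∀ c ∈ π.cycleType, ¬ q ∣ c))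

theorem noCycleLengthDvd_one : NoCycleLengthDvd q (1 : Perm α) := by
  simp [NoCycleLengthDvd]

theorem Disjoint.noCycleLengthDvd_mul_iff {σ τ : Perm α} (h : Disjoint σ τ) :
    NoCycleLengthDvd q (σ * τ) ↔ NoCycleLengthDvd q σ ∧ NoCycleLengthDvd q τ := by
  simp only [NoCycleLengthDvd, h.cycleType_mul, Multiset.mem_add, or_imp, forall_and]

theorem noCycleLengthDvd_ofSubtype {p : α → Prop} [DecidablePred p] {τ : Perm (Subtype p)} :
    NoCycleLengthDvd q (ofSubtype τ) ↔ NoCycleLengthDvd q τ := by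
  simp only [NoCycleLengthDvd, cycleType_ofSubtype]

theorem cycleType_permCongr (e : α ≃ β) (π : Perm α) : (e.permCongr π).cycleType = π.cycleType := by
  have : e.permCongr π = π.extendDomain (e.trans (subtypeUnivEquiv fun _ => trivial).symm) := by
    ext y
    rw [extendDomain_apply_subtype _ _ trivial]
    rfl
  rw [this, cycleType_extendDomain]

theorem card_noCycleLengthDvd_congr (e : α ≃ β) :
    Nat.card {π : Perm α // NoCycleLengthDvd q π} = Nat.card {π : Perm β // NoCycleLengthDvd q π} :=
  Nat.card_congr <| e.permCongr.subtypeEquiv fun π => by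
    simp only [NoCycleLengthDvd, cycleType_permCongr]

theorem cycleOf_cycleOf (f : Perm α) (x : α) : (f.cycleOf x).cycleOf x = f.cycleOf x := by
  by_cases hx : f x = x
  · rw [(cycleOf_eq_one_iff f).2 hx, cycleOf_one]
  · exact (isCycle_cycleOf f hx).cycleOf_eq (by rwa [cycleOf_apply_self])

theorem mem_insert_support_cycleOf_iff {f : Perm α} {x y : α} :
    y ∈ insert x (f.cycleOf x).support ↔ f.SameCycle x y := by
  rw [mem_insert, mem_support_cycleOf_iff]
  refine ⟨?_, fun h => ?_⟩
  · rintro (rfl | ⟨h, -⟩)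
    exacts [SameCycle.refl _ _, h]
  · by_cases hx : x ∈ f.support
    · exact Or.inr ⟨h, hx⟩
    · exact Or.inl (h.eq_of_left (notMem_support.1 hx)).symm

theorem disjoint_ofSubtype_of_support_subset {c : Perm α} {s : Finset α} (h : c.support ⊆ s)
    (τ : Perm {x // x ∉ s}) : Disjoint c (ofSubtype τ) := fun x => by
  by_cases hx : x ∈ s
  · exact Or.inr (ofSubtype_apply_of_not_mem τ (not_not.2 hx))
  · exact Or.inl (notMem_support.1 fun hc => hx (h hc))

/- The cycle through `x₀` is encoded as a permutation `c` with `c.cycleOf x₀ = c` (so `c = 1` when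
`x₀` is fixed), and its length as `#(insert x₀ c.support)`. -/
section CycleOfFiber

variable {x₀ : α} {c : Perm α}

theorem cycleOf_eq_iff_exists_ofSubtype (hc : c.cycleOf x₀ = c) {π : Perm α} :
    π.cycleOf x₀ = c ↔ ∃ τ : Perm {x // x ∉ insert x₀ c.support}, c * ofSubtype τ = π := by
  constructor
  · rintro rfl
    have hS : ∀ x, π x ∉ insert x₀ (π.cycleOf x₀).support ↔
        x ∉ insert x₀ (π.cycleOf x₀).support := by
      simp only [mem_insert_support_cycleOf_iff, sameCycle_apply_right, implies_true]
    set τ : Perm {x // x ∉ insert x₀ (π.cycleOf x₀).support} := π.subtypePerm hS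
    refine ⟨τ, ?_⟩
    ext x
    by_cases hx : x ∈ insert x₀ (π.cycleOf x₀).support
    · rw [mul_apply, ofSubtype_apply_of_not_mem τ (not_not.2 hx)]
      exact (mem_insert_support_cycleOf_iff.1 hx).cycleOf_apply
    · rw [mul_apply, ofSubtype_apply_of_mem τ hx, subtypePerm_apply, ← notMem_support]
      exact fun h => (hS x).2 hx (mem_insert_of_mem h)
  · rintro ⟨τ, rfl⟩
    have hdisj := disjoint_ofSubtype_of_support_subset (subset_insert x₀ c.support) τ
    rw [cycleOf_mul_of_apply_right_eq_self hdisj.commute x₀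
      (ofSubtype_apply_of_not_mem τ (not_not.2 (mem_insert_self _ _))), hc]

theorem card_noCycleLengthDvd_cycleOf_eq (hc : c.cycleOf x₀ = c) (hcq : NoCycleLengthDvd q c) :
    Nat.card {π : Perm α // NoCycleLengthDvd q π ∧ π.cycleOf x₀ = c} =
      Nat.card {τ : Perm {x // x ∉ insert x₀ c.support} // NoCycleLengthDvd q τ} := by
  have hdisj := disjoint_ofSubtype_of_support_subset (subset_insert x₀ c.support)
  symm
  refine Nat.card_eq_of_bijective (fun τ => ⟨c * ofSubtype τ.1, ?_, ?_⟩) ⟨?_, ?_⟩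
  · exact (hdisj _).noCycleLengthDvd_mul_iff.2 ⟨hcq, noCycleLengthDvd_ofSubtype.2 τ.2⟩
  · exact (cycleOf_eq_iff_exists_ofSubtype hc).2 ⟨_, rfl⟩
  · intro τ τ' h
    exact Subtype.ext (ofSubtype_injective (mul_left_cancel (congrArg Subtype.val h)))
  · rintro ⟨π, hπq, hπ⟩
    obtain ⟨τ, rfl⟩ := (cycleOf_eq_iff_exists_ofSubtype hc).1 hπ
    exact ⟨⟨τ, noCycleLengthDvd_ofSubtype.1 ((hdisj τ).noCycleLengthDvd_mul_iff.1 hπq).2⟩, rfl⟩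

end CycleOfFiber

theorem card_cycleType_singleton_mem_support_congr (ℓ : ℕ) (x y : α) :
    #{c : Perm α | c.cycleType = {ℓ} ∧ x ∈ c.support} =
      #{c : Perm α | c.cycleType = {ℓ} ∧ y ∈ c.support} :=
  card_equiv (MulAut.conj (swap x y)).toEquiv fun c => by
    simp only [mem_filter, mem_univ, true_and, MulEquiv.toEquiv_eq_coe, MulEquiv.coe_toEquiv,
      MulAut.conj_apply]
    rw [cycleType_conj, support_conj, mem_map_equiv, symm_swap, swap_apply_right]

theorem card_cycleType_singleton_mem_support (x₀ : α) {ℓ : ℕ} (hℓ : 2 ≤ ℓ)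
    (hℓα : ℓ ≤ Fintype.card α) :
    #{c : Perm α | c.cycleType = {ℓ} ∧ x₀ ∈ c.support} =
      (Fintype.card α - 1).descFactorial (ℓ - 1) := by
  set N := Fintype.card α
  have hN : 0 < N := Fintype.card_pos_iff.2 ⟨x₀⟩
  have double : ∑ x, #{c : Perm α | c.cycleType = {ℓ} ∧ x ∈ c.support} =
      ℓ * #{c : Perm α | c.cycleType = {ℓ}} := by
    set C : Finset (Perm α) := {c | c.cycleType = {ℓ}}
    calc ∑ x, #{c : Perm α | c.cycleType = {ℓ} ∧ x ∈ c.support}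
        = ∑ x, #(bipartiteAbove (fun x c => x ∈ c.support) C x) := by
          simp only [bipartiteAbove, C, filter_filter]
      _ = ∑ c ∈ C, #(bipartiteBelow (fun x c => x ∈ c.support) univ c) :=
          sum_card_bipartiteAbove_eq_sum_card_bipartiteBelow _
      _ = ∑ _c ∈ C, ℓ := sum_congr rfl fun c hc => by
          rw [bipartiteBelow, filter_mem_eq_inter, univ_inter, ← sum_cycleType,
            (mem_filter.1 hc).2, Multiset.sum_singleton]
      _ = ℓ * #C := by rw [sum_const, smul_eq_mul, mul_comm]
  refine Nat.eq_of_mul_eq_mul_left hN ?_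
  calc N * #{c : Perm α | c.cycleType = {ℓ} ∧ x₀ ∈ c.support}
      = ∑ x, #{c : Perm α | c.cycleType = {ℓ} ∧ x ∈ c.support} := by
        rw [sum_congr rfl fun x _ => card_cycleType_singleton_mem_support_congr ℓ x x₀, sum_const,
          card_univ, smul_eq_mul]
    _ = ℓ * ((ℓ - 1).factorial * N.choose ℓ) := by rw [double, card_of_cycleType_singleton hℓ hℓα]
    _ = N.descFactorial ℓ := by
        rw [Nat.descFactorial_eq_factorial_mul_choose, ← mul_assoc,
          Nat.mul_factorial_pred (by omega)]
    _ = N * (N - 1).descFactorial (ℓ - 1) := by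
        conv_lhs => rw [← Nat.sub_add_cancel hN, ← Nat.sub_add_cancel (by omega : 1 ≤ ℓ)]
        rw [Nat.succ_descFactorial_succ, Nat.sub_add_cancel hN]

theorem card_insert_support_eq_one_iff {x₀ : α} {c : Perm α} :
    #(insert x₀ c.support) = 1 ↔ c = 1 := by
  refine ⟨fun h => ?_, by rintro rfl; simp⟩
  rw [← card_support_eq_zero]
  have := (card_le_card (subset_insert x₀ c.support)).trans h.le
  have := c.card_support_ne_one
  omega

theorem cycleOf_eq_self_and_card_insert_support_iff {x₀ : α} {c : Perm α} {ℓ : ℕ} (hℓ : 2 ≤ ℓ) :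
    c.cycleOf x₀ = c ∧ #(insert x₀ c.support) = ℓ ↔ c.cycleType = {ℓ} ∧ x₀ ∈ c.support := by
  constructor
  · rintro ⟨hc, hcard⟩
    have hx₀ : x₀ ∈ c.support := by
      by_contra hx₀
      rw [(cycleOf_eq_one_iff c).2 (notMem_support.1 hx₀)] at hc
      rw [← hc, support_one, insert_empty, card_singleton] at hcard
      omega
    rw [insert_eq_of_mem hx₀] at hcard
    have hcycle : c.IsCycle := hc ▸ isCycle_cycleOf c (mem_support.1 hx₀)
    exact ⟨by rw [hcycle.cycleType, hcard], hx₀⟩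
  · rintro ⟨hcycle, hx₀⟩
    have hc : c.IsCycle := card_cycleType_eq_one.1 (by rw [hcycle, Multiset.card_singleton])
    refine ⟨hc.cycleOf_eq (mem_support.1 hx₀), ?_⟩
    rw [insert_eq_of_mem hx₀, ← sum_cycleType, hcycle, Multiset.sum_singleton]

theorem card_noCycleLengthDvd_cycleOf_eq_self_length_eq (x₀ : α) (hq : q ≠ 1) {ℓ : ℕ}
    (hℓ : ℓ ∈ Icc 1 (Fintype.card α)) :
    #{c : Perm α | (c.cycleOf x₀ = c ∧ NoCycleLengthDvd q c) ∧ #(insert x₀ c.support) = ℓ} =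
      if q ∣ ℓ then 0 else (Fintype.card α - 1).descFactorial (ℓ - 1) := by
  obtain ⟨h1, hℓα⟩ := mem_Icc.1 hℓ
  rcases h1.eq_or_lt with rfl | h2
  · have : ∀ c : Perm α,
        (c.cycleOf x₀ = c ∧ NoCycleLengthDvd q c) ∧ #(insert x₀ c.support) = 1 ↔ c = 1 := by
      intro c
      rw [card_insert_support_eq_one_iff]
      exact ⟨And.right, by rintro rfl; exact ⟨⟨cycleOf_one x₀, noCycleLengthDvd_one⟩, rfl⟩⟩
    rw [filter_congr fun c _ => this c, filter_eq' univ, if_pos (mem_univ _), card_singleton,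
      if_neg (by rwa [Nat.dvd_one]), Nat.descFactorial_zero]
  · have : ∀ c : Perm α, (c.cycleOf x₀ = c ∧ NoCycleLengthDvd q c) ∧ #(insert x₀ c.support) = ℓ ↔
        (c.cycleType = {ℓ} ∧ x₀ ∈ c.support) ∧ ¬ q ∣ ℓ := by
      intro c
      rw [and_right_comm, cycleOf_eq_self_and_card_insert_support_iff h2]
      constructor
      · rintro ⟨⟨hcycle, hx₀⟩, hcq⟩
        exact ⟨⟨hcycle, hx₀⟩, hcq ℓ (by rw [hcycle]; exact Multiset.mem_singleton_self ℓ)⟩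
      · rintro ⟨⟨hcycle, hx₀⟩, hdvd⟩
        refine ⟨⟨hcycle, hx₀⟩, ?_⟩
        simpa [NoCycleLengthDvd, hcycle] using hdvd
    rw [filter_congr fun c _ => this c]
    split_ifs with hdvd
    · simp [hdvd]
    · simp only [hdvd, not_false_eq_true, and_true]
      exact card_cycleType_singleton_mem_support x₀ h2 hℓα

theorem card_noCycleLengthDvd_eq_sum (hq : q ≠ 1) (x₀ : α) :
    Nat.card {π : Perm α // NoCycleLengthDvd q π} =
      ∑ ℓ ∈ Icc 1 (Fintype.card α), if q ∣ ℓ then 0 else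
        (Fintype.card α - 1).descFactorial (ℓ - 1) *
          Nat.card {τ : Perm (Fin (Fintype.card α - ℓ)) // NoCycleLengthDvd q τ} := by
  set N := Fintype.card α
  set T : Finset (Perm α) := {c | c.cycleOf x₀ = c ∧ NoCycleLengthDvd q c}
  set len : Perm α → ℕ := fun c => #(insert x₀ c.support)
  set A : ℕ → ℕ := fun m => Nat.card {τ : Perm (Fin m) // NoCycleLengthDvd q τ}
  have maps_to_T : ∀ π ∈ ({π | NoCycleLengthDvd q π} : Finset (Perm α)), π.cycleOf x₀ ∈ T := by
    intro π hπ
    refine mem_filter.2 ⟨mem_univ _, cycleOf_cycleOf π x₀, ?_⟩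
    obtain ⟨τ, hτ⟩ := (cycleOf_eq_iff_exists_ofSubtype (cycleOf_cycleOf π x₀)).1 rfl
    rw [← hτ] at hπ
    exact ((disjoint_ofSubtype_of_support_subset (subset_insert _ _) τ).noCycleLengthDvd_mul_iff.1
      (mem_filter.1 hπ).2).1
  have fiber : ∀ c ∈ T, #{π | NoCycleLengthDvd q π ∧ π.cycleOf x₀ = c} = A (N - len c) := by
    intro c hc
    obtain ⟨hc, hcq⟩ := (mem_filter.1 hc).2
    rw [← Fintype.card_subtype, ← Nat.card_eq_fintype_card,
      card_noCycleLengthDvd_cycleOf_eq hc hcq]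
    refine card_noCycleLengthDvd_congr (Fintype.equivFinOfCardEq ?_)
    rw [Fintype.card_subtype_compl, Fintype.card_coe]
  have maps_to_Icc : ∀ c ∈ T, len c ∈ Icc 1 N :=
    fun c _ => mem_Icc.2 ⟨card_pos.2 (insert_nonempty _ _), card_le_univ _⟩
  calc Nat.card {π : Perm α // NoCycleLengthDvd q π}
      = #({π | NoCycleLengthDvd q π} : Finset (Perm α)) := by
        rw [Nat.card_eq_fintype_card, Fintype.card_subtype]
    _ = ∑ c ∈ T, #{π | NoCycleLengthDvd q π ∧ π.cycleOf x₀ = c} := by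
        rw [card_eq_sum_card_fiberwise maps_to_T]
        simp only [filter_filter]
    _ = ∑ c ∈ T, A (N - len c) := sum_congr rfl fiber
    _ = ∑ ℓ ∈ Icc 1 N, ∑ c ∈ T with len c = ℓ, A (N - ℓ) := by
        rw [← sum_fiberwise_of_maps_to maps_to_Icc]
        exact sum_congr rfl fun ℓ _ => sum_congr rfl fun c hc => by rw [(mem_filter.1 hc).2]
    _ = _ := sum_congr rfl fun ℓ hℓ => by
        rw [sum_const, smul_eq_mul, filter_filter,
          card_noCycleLengthDvd_cycleOf_eq_self_length_eq x₀ hq hℓ, ite_mul, zero_mul]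

end Equiv.Perm

noncomputable def qFreeDensity (q m : ℕ) : ℝ := ∏ j ∈ Icc 1 (m / q), (1 - 1 / ((j : ℝ) * q))

namespace qFreeDensity

variable {q : ℕ}

theorem succ_of_not_dvd {m : ℕ} (h : ¬ q ∣ m + 1) : qFreeDensity q (m + 1) = qFreeDensity q m := by
  rw [qFreeDensity, qFreeDensity, Nat.succ_div_of_not_dvd h]

theorem succ_of_dvd {m : ℕ} (h : q ∣ m + 1) :
    (m + 1 : ℝ) * qFreeDensity q (m + 1) = m * qFreeDensity q m := by
  have hj : (((m / q + 1 : ℕ) : ℝ)) * q = m + 1 := by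
    rw [← Nat.succ_div_of_dvd h]; exact_mod_cast Nat.div_mul_cancel h
  rw [qFreeDensity, qFreeDensity, Nat.succ_div_of_dvd h,
    prod_Icc_succ_top (Nat.le_add_left 1 _), hj, mul_left_comm, mul_sub, mul_one,
    mul_one_div_cancel (by positivity), add_sub_cancel_right, mul_comm]

theorem div_mul (hq : 0 < q) (m : ℕ) : qFreeDensity q (m / q * q) = qFreeDensity q m := by
  rw [qFreeDensity, qFreeDensity, Nat.mul_div_cancel _ hq]

theorem sum_range_sub_sum_range_div (hq : 0 < q) (M : ℕ) :
    ∑ k ∈ range M, qFreeDensity q k - ∑ i ∈ range (M / q), qFreeDensity q (i * q) =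
      M * qFreeDensity q M := by
  induction M with
  | zero => simp
  | succ M ih =>
    rw [sum_range_succ]
    by_cases h : q ∣ M + 1
    · rw [Nat.succ_div_of_dvd h, sum_range_succ, div_mul hq, Nat.cast_succ, succ_of_dvd h]
      linarith
    · rw [Nat.succ_div_of_not_dvd h, succ_of_not_dvd h, Nat.cast_succ]
      linarith

theorem sum_Icc_dvd (hq : 0 < q) (M : ℕ) :
    ∑ ℓ ∈ Icc 1 M with q ∣ ℓ, qFreeDensity q (M - ℓ) =
      ∑ i ∈ range (M / q), qFreeDensity q (i * q) := by
  refine sum_nbij' (fun ℓ => M / q - ℓ / q) (fun i => (M / q - i) * q) ?_ ?_ ?_ ?_ ?_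
  · simp only [mem_filter, mem_Icc, mem_range, and_imp]
    rintro _ h1 hM ⟨j, rfl⟩
    have : 1 ≤ j := Nat.pos_of_mul_pos_left h1
    have : j ≤ M / q := (Nat.le_div_iff_mul_le hq).2 (by rwa [mul_comm])
    rw [Nat.mul_div_cancel_left _ hq]
    omega
  · simp only [mem_filter, mem_Icc, mem_range]
    intro i hi
    refine ⟨⟨Nat.mul_pos (by omega) hq, ?_⟩, dvd_mul_left q _⟩
    exact (Nat.mul_le_mul_right q (Nat.sub_le _ i)).trans (Nat.div_mul_le_self M q)
  · simp only [mem_filter, mem_Icc, and_imp]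
    rintro _ h1 hM ⟨j, rfl⟩
    have : j ≤ M / q := (Nat.le_div_iff_mul_le hq).2 (by rwa [mul_comm])
    rw [Nat.mul_div_cancel_left _ hq, Nat.sub_sub_self this, mul_comm]
  · simp only [mem_range]
    intro i hi
    rw [Nat.mul_div_cancel _ hq]
    omega
  · simp only [mem_filter, mem_Icc, and_imp]
    rintro _ - - ⟨j, rfl⟩
    rw [Nat.mul_div_cancel_left _ hq, ← Nat.sub_mul_div, div_mul hq]

theorem sum_Icc_not_dvd (hq : 0 < q) (M : ℕ) :
    ∑ ℓ ∈ Icc 1 M, (if q ∣ ℓ then 0 else qFreeDensity q (M - ℓ)) = M * qFreeDensity q M := by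
  have reflect : ∑ ℓ ∈ Icc 1 M, qFreeDensity q (M - ℓ) = ∑ k ∈ range M, qFreeDensity q k := by
    rw [← Ico_add_one_right_eq_Icc, sum_Ico_reflect _ _ le_rfl, Nat.sub_self, Nat.add_sub_cancel,
      range_eq_Ico]
  rw [← sum_range_sub_sum_range_div hq, ← reflect, ← sum_Icc_dvd hq, sum_ite, sum_const_zero,
    zero_add, ← sum_filter_add_sum_filter_not (Icc 1 M) (q ∣ ·)]
  ring

end qFreeDensity

open Equiv.Perm in
theorem card_noCycleLengthDvd_fin {q : ℕ} (hq : 2 ≤ q) (n : ℕ) :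
    (Nat.card {π : Equiv.Perm (Fin n) // NoCycleLengthDvd q π} : ℝ) =
      n.factorial * qFreeDensity q n := by
  induction n using Nat.strong_induction_on with
  | _ n ih =>
  rcases n with _ | N
  · have : Nat.card {π : Equiv.Perm (Fin 0) // NoCycleLengthDvd q π} = 1 :=
        Nat.card_eq_one_iff_unique.2 ⟨inferInstance, ⟨⟨1, noCycleLengthDvd_one⟩⟩⟩
    rw [this]
    simp [qFreeDensity]
  · rw [card_noCycleLengthDvd_eq_sum (by omega) 0, Fintype.card_fin, Nat.add_sub_cancel,
      Nat.cast_sum]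
    calc ∑ ℓ ∈ Icc 1 (N + 1), ((if q ∣ ℓ then 0 else N.descFactorial (ℓ - 1) *
            Nat.card {τ : Equiv.Perm (Fin (N + 1 - ℓ)) // NoCycleLengthDvd q τ} : ℕ) : ℝ)
        = ∑ ℓ ∈ Icc 1 (N + 1), N.factorial * (if q ∣ ℓ then 0 else qFreeDensity q (N + 1 - ℓ)) :=
          sum_congr rfl fun ℓ hℓ => by
            obtain ⟨h1, hℓN⟩ := mem_Icc.1 hℓ
            split_ifs
            · simp
            · rw [Nat.cast_mul, ih _ (by omega), ← mul_assoc, ← Nat.cast_mul,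
                mul_comm _ (Nat.factorial _), show N + 1 - ℓ = N - (ℓ - 1) by omega,
                Nat.factorial_mul_descFactorial (by omega)]
      _ = (N + 1).factorial * qFreeDensity q (N + 1) := by
          rw [← mul_sum, qFreeDensity.sum_Icc_not_dvd (by omega), Nat.factorial_succ]
          push_cast
          ring

theorem stmt_14_general (n q : ℕ) (hq : 2 ≤ q) :
    (Nat.card {π : Equiv.Perm (Fin n) // ∀ c ∈ π.cycleType, ¬ q ∣ c} : ℝ) =
      Nat.factorial n * ∏ j ∈ Finset.Icc 1 (n / q), (1 - 1 / ((j : ℝ) * q)) :=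
  card_noCycleLengthDvd_fin hq n

theorem stmt_14 (n q : ℕ) (hn : 0 < n) (hq : 2 ≤ q) :
    (Nat.card {π : Equiv.Perm (Fin n) // ∀ c ∈ π.cycleType, ¬ q ∣ c} : ℝ) =
      Nat.factorial n * ∏ j ∈ Finset.Icc 1 (n / q), (1 - 1 / ((j : ℝ) * q)) :=
  stmt_14_general n q hq
end

section
/- For every integer k ≥ 2, setting n := lcm(1, 2, ..., k) + k, we have k ∈ K_n; moreover k ≥ log n / log 5, so k ≥ c·log n with the absolute constant c = 1/log 5 > 0. -/
open Finset Nat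

private def Lf (n : ℕ) : ℕ := (Finset.Icc 1 n).lcm id

private lemma Lf_ne_zero (n : ℕ) : Lf n ≠ 0 := by
  intro h
  rw [Lf, Finset.lcm_eq_zero_iff] at h
  obtain ⟨i, hi, hi0⟩ := h
  simp only [Finset.mem_coe, Finset.mem_Icc, id] at hi hi0
  omega

private lemma dvd_Lf {i n : ℕ} (h1 : 1 ≤ i) (h2 : i ≤ n) : i ∣ Lf n :=
  Finset.dvd_lcm (by simp [Finset.mem_Icc, h1, h2])

private lemma key (k k' : ℕ) (hk : 1 ≤ k) (hkk : k ≤ k') :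
    Lf (k + k') ∣ (k + k').choose k * Lf k' := by
  apply Finset.lcm_dvd
  intro i hi
  simp only [Finset.mem_Icc] at hi
  obtain ⟨hi1, hi2⟩ := hi
  have hC : (k + k').choose k ≠ 0 := (Nat.choose_pos (Nat.le_add_right k k')).ne'
  have hL' : Lf k' ≠ 0 := Lf_ne_zero k'
  rw [id, ← Nat.factorization_le_iff_dvd (by omega) (mul_ne_zero hC hL'),
    Nat.factorization_mul hC hL', Finsupp.le_def]
  intro p
  by_cases hp : p.Prime
  · haveI : Fact p.Prime := ⟨hp⟩
    set e := i.factorization p with he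
    have hpe : p ^ e ∣ i := Nat.ordProj_dvd i p
    have hpen : p ^ e ≤ k + k' := le_trans (Nat.le_of_dvd (by omega) hpe) hi2
    set b := Nat.log p k' with hb
    have hpb : p ^ b ∣ Lf k' :=
      dvd_Lf (Nat.one_le_iff_ne_zero.mpr (pow_ne_zero _ hp.pos.ne'))
        (Nat.pow_log_le_self p (by omega))
    have hbv : b ≤ (Lf k').factorization p :=
      (hp.pow_dvd_iff_le_factorization hL').mp hpb
    simp only [Finsupp.add_apply]
    rcases le_or_gt e b with h | h
    · exact le_trans h (le_trans hbv (Nat.le_add_left _ _))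
    · -- need e - b ≤ factorization of choose
      have hlog : e ≤ Nat.log p (k + k') := Nat.le_log_of_pow_le hp.one_lt hpen
      have hval : ((k + k').choose k).factorization p =
          ((Finset.Ico 1 (Nat.log p (k + k') + 1)).filter
            fun j => p ^ j ≤ k % p ^ j + ((k + k') - k) % p ^ j).card := by
        rw [Nat.factorization_def _ hp]
        exact padicValNat_choose (Nat.le_add_right k k') (Nat.lt_succ_self _)
      have hsub : Finset.Ioc b e ⊆ (Finset.Ico 1 (Nat.log p (k + k') + 1)).filter
          fun j => p ^ j ≤ k % p ^ j + ((k + k') - k) % p ^ j := by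
        intro j hj
        simp only [Finset.mem_Ioc] at hj
        have hjk' : k' < p ^ j := by
          calc k' < p ^ (b + 1) := Nat.lt_pow_succ_log_self hp.one_lt k'
          _ ≤ p ^ j := Nat.pow_le_pow_right hp.pos hj.1
        have hjk : k < p ^ j := lt_of_le_of_lt hkk hjk'
        have hpj : p ^ j ≤ k + k' := le_trans (Nat.pow_le_pow_right hp.pos hj.2) hpen
        simp only [Finset.mem_filter, Finset.mem_Ico]
        refine ⟨⟨by omega, by omega⟩, ?_⟩
        rw [Nat.add_sub_cancel_left, Nat.mod_eq_of_lt hjk, Nat.mod_eq_of_lt hjk']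
        exact hpj
      have hcard : e - b ≤ ((k + k').choose k).factorization p := by
        rw [hval]
        calc e - b = (Finset.Ioc b e).card := (Nat.card_Ioc b e).symm
        _ ≤ _ := Finset.card_le_card hsub
      omega
  · simp [Nat.factorization_eq_zero_of_not_prime i hp]

private lemma choose_two_mul_le (m : ℕ) : (m + m).choose m ≤ 4 ^ m := by
  calc (m + m).choose m ≤ (2 * m + 1).choose m :=
        Nat.choose_le_choose m (by omega)
  _ ≤ 4 ^ m := Nat.choose_middle_le_pow m

private lemma Lf_le (n : ℕ) : Lf n ≤ 4 ^ n := by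
  induction n using Nat.strong_induction_on with
  | _ n ih =>
    rcases Nat.lt_or_ge n 2 with hn | hn
    · interval_cases n <;> simp [Lf] <;> decide
    · rcases Nat.even_or_odd n with ⟨m, hm⟩ | ⟨m, hm⟩
      · have hm1 : 1 ≤ m := by omega
        have := key m m hm1 le_rfl
        have hle : Lf (m + m) ≤ (m + m).choose m * Lf m :=
          Nat.le_of_dvd (Nat.mul_pos (Nat.choose_pos (by omega)) (Nat.pos_of_ne_zero (Lf_ne_zero _))) this
        calc Lf n = Lf (m + m) := by rw [hm]
        _ ≤ (m + m).choose m * Lf m := hle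
        _ ≤ 4 ^ m * 4 ^ m :=
            Nat.mul_le_mul (choose_two_mul_le m) (ih m (by omega))
        _ = 4 ^ n := by rw [← pow_add]; congr 1; omega
      · have hm1 : 1 ≤ m := by omega
        have := key m (m + 1) hm1 (by omega)
        have hle : Lf (m + (m + 1)) ≤ (m + (m + 1)).choose m * Lf (m + 1) :=
          Nat.le_of_dvd (Nat.mul_pos (Nat.choose_pos (by omega)) (Nat.pos_of_ne_zero (Lf_ne_zero _))) this
        have hch : (m + (m + 1)).choose m ≤ 4 ^ m := by
          have : m + (m + 1) = 2 * m + 1 := by omega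
          rw [this]; exact Nat.choose_middle_le_pow m
        calc Lf n = Lf (m + (m + 1)) := by rw [hm]; congr 1; omega
        _ ≤ (m + (m + 1)).choose m * Lf (m + 1) := hle
        _ ≤ 4 ^ m * 4 ^ (m + 1) :=
            Nat.mul_le_mul hch (ih (m + 1) (by omega))
        _ = 4 ^ n := by rw [← pow_add]; congr 1; omega

private lemma four_pow_add_le (k : ℕ) (hk : 2 ≤ k) : 4 ^ k + k ≤ 5 ^ k := by
  induction k with
  | zero => omega
  | succ k ih =>
    rcases Nat.lt_or_ge k 2 with h | h
    · interval_cases k <;> norm_num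
    · have := ih h
      have h4 : (4:ℕ) ^ k ≤ 4 ^ (k + 1) := by
        apply Nat.pow_le_pow_right <;> omega
      calc 4 ^ (k + 1) + (k + 1) ≤ 4 * 4 ^ k + (k + 1) := by ring_nf; omega
      _ ≤ 5 * 5 ^ k := by
          have h1 : 1 ≤ 4 ^ k := Nat.one_le_pow _ _ (by norm_num)
          omega
      _ = 5 ^ (k + 1) := by ring

theorem stmt_17 (k n : ℕ) (hk : 2 ≤ k) (hn : n = (Finset.Icc 1 k).lcm id + k) :
    (k < n ∧ (Finset.Icc 1 k).lcm id ∣ n - k) ∧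
    (k : ℝ) ≥ Real.log n / Real.log 5 := by
  have hL : (Finset.Icc 1 k).lcm id = Lf k := rfl
  have hL0 : Lf k ≠ 0 := Lf_ne_zero k
  have hkn : k < n := by rw [hn, hL]; omega
  refine ⟨⟨hkn, ?_⟩, ?_⟩
  · rw [hn, hL, Nat.add_sub_cancel]
  · have hn5 : n ≤ 5 ^ k := by
      rw [hn, hL]
      calc Lf k + k ≤ 4 ^ k + k := by have := Lf_le k; omega
      _ ≤ 5 ^ k := four_pow_add_le k hk
    have hn0 : (0:ℝ) < n := by
      have : 0 < n := by omega
      exact_mod_cast this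
    have hlog5 : (0:ℝ) < Real.log 5 := Real.log_pos (by norm_num)
    rw [ge_iff_le, div_le_iff₀ hlog5]
    calc Real.log n ≤ Real.log ((5:ℝ) ^ k) := by
          apply Real.log_le_log hn0
          exact_mod_cast hn5
    _ = k * Real.log 5 := by rw [Real.log_pow]
end

section
/- If m has a unique divisor d with n - √n < d ≤ n, and k := n - d satisfies 1 ≤ k < √n, then for any permutation π of {1, ..., n} with ord(π) = m, either π has a cycle of length d and the rest of π (restricted to the remaining k points) has order σ with lcm(σ, d) = m, or π has no cycle of length exceeding n - √n. -/
/-! A cycle of length `ℓ > n - √n` has `ℓ ∣ ord(π) = m` and `ℓ ≤ n`, so by uniqueness `ℓ = d`.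
Removing that cycle leaves a permutation disjoint from it, whence `m = lcm(ord(π c⁻¹), d)`. -/

namespace Equiv.Perm

variable {α : Type*} [Fintype α] [DecidableEq α]

theorem exists_mem_cycleFactorsFinset_of_mem_cycleType {σ : Perm α} {ℓ : ℕ}
    (h : ℓ ∈ σ.cycleType) : ∃ c ∈ σ.cycleFactorsFinset, c.support.card = ℓ := by
  rw [cycleType_def, Multiset.mem_map] at h
  exact h

theorem orderOf_eq_lcm_of_mem_cycleFactorsFinset {σ c : Perm α}
    (hc : c ∈ σ.cycleFactorsFinset) :
    orderOf σ = Nat.lcm (orderOf (σ * c⁻¹)) c.support.card := by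
  have hcycle : c.IsCycle := (mem_cycleFactorsFinset_iff.mp hc).1
  rw [← hcycle.orderOf, ← (disjoint_mul_inv_of_mem_cycleFactorsFinset hc).orderOf,
    inv_mul_cancel_right]

end Equiv.Perm

open Equiv.Perm in
theorem stmt_19_general (n m d : ℕ)
    (huniq : ∀ d' : ℕ, d' ∣ m → (n : ℝ) - Real.sqrt n < d' → d' ≤ n → d' = d)
    (π : Equiv.Perm (Fin n)) (hπ : orderOf π = m) :
    (∃ c ∈ π.cycleFactorsFinset, c.support.card = d ∧
        Nat.lcm (orderOf (π * c⁻¹)) d = m) ∨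
      (∀ c ∈ π.cycleType, (c : ℝ) ≤ (n : ℝ) - Real.sqrt n) := by
  by_cases hsmall : ∀ c ∈ π.cycleType, (c : ℝ) ≤ (n : ℝ) - Real.sqrt n
  · exact Or.inr hsmall
  left
  push Not at hsmall
  obtain ⟨ℓ, hℓ, hlong⟩ := hsmall
  obtain ⟨c, hc, rfl⟩ := exists_mem_cycleFactorsFinset_of_mem_cycleType hℓ
  have hcard_le : c.support.card ≤ n :=
    (le_card_support_of_mem_cycleType hℓ).trans (π.support.card_le_univ.trans_eq (Fintype.card_fin n))
  have hcard : c.support.card = d :=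
    huniq _ (hπ ▸ dvd_of_mem_cycleType hℓ) hlong hcard_le
  refine ⟨c, hc, hcard, ?_⟩
  rw [← hcard, ← orderOf_eq_lcm_of_mem_cycleFactorsFinset hc, hπ]

theorem stmt_19 (n m d k : ℕ) (hn : 4 ≤ n) (hm : 0 < m)
    (hd : d ∣ m) (hd₁ : (n : ℝ) - Real.sqrt n < d) (hd₂ : d ≤ n)
    (huniq : ∀ d' : ℕ, d' ∣ m → (n : ℝ) - Real.sqrt n < d' → d' ≤ n → d' = d)
    (hk : k = n - d) (hk₁ : 1 ≤ k) (hk₂ : (k : ℝ) < Real.sqrt n)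
    (π : Equiv.Perm (Fin n)) (hπ : orderOf π = m) :
    (∃ c ∈ π.cycleFactorsFinset, c.support.card = d ∧
        Nat.lcm (orderOf (π * c⁻¹)) d = m) ∨
      (∀ c ∈ π.cycleType, (c : ℝ) ≤ (n : ℝ) - Real.sqrt n) :=
  stmt_19_general n m d huniq π hπ
end
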